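/- Let k₀ ∈ L²([0,1]²) be a stochastic kernel whose integral operator L₀ : L² → L² satisfies the mixing condition (A1), and let f₀ be the unique fixed point of L₀ with ∫ f₀ dm = 1. Fix 0 < l < 1. Let c ∈ L² with ⟨c, f₀⟩ = 0, and let w ∈ L² satisfy ⟨w, f₀⟩ = 0 and w − L₀* w = c (i.e. w = (Id − L₀*)⁻¹ c, where L₀* is the Hilbert adjoint of L₀). Assume there exists Ξ' ⊆ Ξ(F_l) with m(Ξ') > 0 such that for every y ∈ Ξ': f₀(y) > 0, ∫_{F_l^y} w⁺ dm > 0 and ∫_{F_l^y} w⁻ dm > 0. Define M(x,y) := 𝟙_{F_l}(x,y) · f₀(y) · ( w(x) − (1/m(F_l^y)) ∫_{F_l^y} w(z) dz ) and α := ‖M‖_{L²([0,1]²)}. Then α > 0, k̂ := M/α belongs to V_ker ∩ S_{k₀,l} with ‖k̂‖_{L²([0,1]²)} = 1, and k̂ is the unique maximizer of the functional J(k) := ∫₀¹∫₀¹ w(x) k(x,y) f₀(y) dy dx over the set {k ∈ V_ker ∩ S_{k₀,l} : ‖k‖_{L²([0,1]²)} = 1}. (For k in this set, J(k) equals ⟨c,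 (Id − L₀)⁻¹ ∫₀¹ k(·,y) f₀(y) dy⟩, the linear response of the expectation of the observable c.) -/

import Mathlib

open MeasureTheory
open scoped RealInnerProductSpace

/-- Lebesgue measure restricted to the unit interval `[0,1]`. -/
noncomputable def μ01 : Measure ℝ := volume.restrict (Set.Icc (0 : ℝ) 1)

/-- Two-dimensional Lebesgue measure restricted to the unit square `[0,1]²`. -/
noncomputable def ν01 : Measure (ℝ × ℝ) := μ01.prod μ01

/-- The region `F_l ⊆ [0,1]²` where the kernel `k₀` is at least `l`. -/
def Fset (k₀ : ℝ × ℝ → ℝ) (l : ℝ) : Set (ℝ × ℝ) :=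
  {p | p ∈ Set.Icc (0 : ℝ) 1 ×ˢ Set.Icc (0 : ℝ) 1 ∧ l ≤ k₀ p}

/-- The `y`-section `F_l^y = {x ∈ [0,1] : (x,y) ∈ F_l}`. -/
def Fsec (k₀ : ℝ × ℝ → ℝ) (l : ℝ) (y : ℝ) : Set ℝ :=
  {x | (x, y) ∈ Fset k₀ l}

/-- `Ξ(F_l)`: the set of `y ∈ [0,1]` whose section `F_l^y` has positive measure. -/
def XiF (k₀ : ℝ × ℝ → ℝ) (l : ℝ) : Set ℝ :=
  {y | y ∈ Set.Icc (0 : ℝ) 1 ∧ 0 < μ01 (Fsec k₀ l y)}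

/-- The (un-normalized) optimal kernel perturbation
`M(x,y) = 𝟙_{F_l}(x,y) f₀(y) (w(x) − (1/m(F_l^y)) ∫_{F_l^y} w)`. -/
noncomputable def Mopt (k₀ : ℝ × ℝ → ℝ) (l : ℝ) (f₀ w : ℝ → ℝ) : ℝ × ℝ → ℝ :=
  (Fset k₀ l).indicator fun p =>
    f₀ p.2 * (w p.1 - (∫ z in Fsec k₀ l p.2, w z ∂μ01) / (μ01 (Fsec k₀ l p.2)).toReal)

/-- The feasible set `{k ∈ V_ker ∩ S_{k₀,l} : ‖k‖₂ = 1}`. -/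
def feasSet (k₀ : ℝ × ℝ → ℝ) (l : ℝ) : Set (Lp ℝ 2 ν01) :=
  {k : Lp ℝ 2 ν01 |
    (∀ᵐ y ∂μ01, ∫ x, k (x, y) ∂μ01 = 0) ∧
    (∀ᵐ p ∂ν01, p ∉ Fset k₀ l → k p = 0) ∧ ‖k‖ = 1}

/-- The objective `J(k) = ∫∫ w(x) k(x,y) f₀(y) dy dx`. -/
noncomputable def Jobj (w f₀ : ℝ → ℝ) (k : Lp ℝ 2 ν01) : ℝ :=
  ∫ x, (∫ y, w x * k (x, y) * f₀ y ∂μ01) ∂μ01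

/-!
For `k` with vanishing column integrals and supported in `F_l`, the objective `J(k)` is the
`L²` pairing of `k` with `w ⊗ f₀`, and also with `M`: on `F_l` the two kernels differ by
`f₀(y) ⨍_{F_l^y} w`, a function of `y` alone. Since `M/‖M‖` is itself admissible, Cauchy–Schwarz
makes it the unique maximiser on the unit sphere. `M ≠ 0` because on a set of columns of positive
measure `f₀ > 0` while `w` takes both signs on `F_l^y`, so `w` is not a.e. equal to its mean there.
-/

namespace KernelPerturbation

open Filter

section InnerProduct

variable {E : Type*} [NormedAddCommGroup E] [InnerProductSpace ℝ E]

theorem eq_inv_norm_smul_of_inner_eq_norm {v k : E} (hv : v ≠ 0) (hk : ‖k‖ = 1)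
    (h : ⟪v, k⟫ = ‖v‖) : k = ‖v‖⁻¹ • v := by
  have hvk := inner_eq_norm_mul_iff_real.mp (by rw [h, hk, mul_one])
  rw [hk, one_smul] at hvk
  rw [eq_inv_smul_iff₀ (norm_ne_zero_iff.mpr hv)]
  exact hvk.symm

theorem unique_maximizer_of_eq_inner {S : Set E} {J : E → ℝ} {v : E} (hv : v ≠ 0)
    (hS : ∀ k ∈ S, ‖k‖ = 1 ∧ J k = ⟪v, k⟫) (hmem : ‖v‖⁻¹ • v ∈ S) :
    (∀ k ∈ S, J k ≤ J (‖v‖⁻¹ • v)) ∧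
      ∀ k ∈ S, (∀ k' ∈ S, J k' ≤ J k) → k = ‖v‖⁻¹ • v := by
  have hmax : J (‖v‖⁻¹ • v) = ‖v‖ := by
    rw [(hS _ hmem).2, real_inner_smul_right, real_inner_self_eq_norm_sq]
    field_simp [norm_ne_zero_iff.mpr hv]
  have hle : ∀ k ∈ S, J k ≤ ‖v‖ := fun k hk => by
    simpa [(hS k hk).1, (hS k hk).2] using real_inner_le_norm v k
  refine ⟨fun k hk => hmax.symm ▸ hle k hk, fun k hk hkmax => ?_⟩
  refine eq_inv_norm_smul_of_inner_eq_norm hv (hS k hk).1 ?_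
  rw [← (hS k hk).2]
  exact le_antisymm (hle k hk) (hmax ▸ hkmax _ hmem)

end InnerProduct

section CenteredKernel

variable {α β : Type*} [MeasurableSpace α] {μ : Measure α}

theorem integral_sub_average_sq_le [IsFiniteMeasure μ] {w : α → ℝ} (hw : MemLp w 2 μ) :
    ∫ x, (w x - ⨍ y, w y ∂μ) ^ 2 ∂μ ≤ ∫ x, w x ^ 2 ∂μ := by
  set c := ⨍ y, w y ∂μ
  have hw2 := hw.integrable_sq
  have hw1 := (hw.integrable one_le_two).const_mul (2 * c)
  have hmean : ∫ x, w x ∂μ = μ.real Set.univ * c := by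
    rw [← measure_smul_average μ w, smul_eq_mul]
  have hexpand : ∫ x, (w x - c) ^ 2 ∂μ = ∫ x, w x ^ 2 ∂μ - μ.real Set.univ * c ^ 2 := by
    calc ∫ x, (w x - c) ^ 2 ∂μ = ∫ x, (w x ^ 2 - 2 * c * w x + c ^ 2) ∂μ := by
          congr with x; ring
      _ = ∫ x, w x ^ 2 ∂μ - 2 * c * ∫ x, w x ∂μ + μ.real Set.univ * c ^ 2 := by
          rw [integral_add (f := fun x => w x ^ 2 - 2 * c * w x) (hw2.sub hw1)
            (integrable_const _), integral_sub hw2 hw1, integral_const_mul, integral_const,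
            smul_eq_mul]
      _ = _ := by rw [hmean]; ring
  rw [hexpand]
  nlinarith [measureReal_nonneg (μ := μ) (s := Set.univ), sq_nonneg c]

noncomputable def centeredKernel (μ : Measure α) (F : Set (α × β)) (f : β → ℝ) (w : α → ℝ) :
    α × β → ℝ :=
  F.indicator fun p => f p.2 * (w p.1 - ⨍ x in (·, p.2) ⁻¹' F, w x ∂μ)

variable {F F' : Set (α × β)} {f : β → ℝ} {w : α → ℝ}

theorem centeredKernel_apply_mk (x : α) (y : β) :
    centeredKernel μ F f w (x, y) = ((·, y) ⁻¹' F).indicator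
      (fun x => f y * (w x - ⨍ x in (·, y) ⁻¹' F, w x ∂μ)) x := rfl

theorem centeredKernel_sq_apply_mk (x : α) (y : β) :
    centeredKernel μ F f w (x, y) ^ 2 = ((·, y) ⁻¹' F).indicator
      (fun x => f y ^ 2 * (w x - ⨍ x in (·, y) ⁻¹' F, w x ∂μ) ^ 2) x := by
  rw [centeredKernel_apply_mk]
  by_cases hx : x ∈ (·, y) ⁻¹' F <;> simp [hx, mul_pow]

theorem integral_centeredKernel_sq_section_le [IsFiniteMeasure μ] (hw : MemLp w 2 μ) {y : β}
    (hs : NullMeasurableSet ((·, y) ⁻¹' F) μ) :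
    ∫ x, centeredKernel μ F f w (x, y) ^ 2 ∂μ ≤ f y ^ 2 * ∫ x, w x ^ 2 ∂μ := by
  simp_rw [centeredKernel_sq_apply_mk]
  rw [integral_indicator₀ hs, integral_const_mul]
  gcongr
  calc _ ≤ ∫ x in (·, y) ⁻¹' F, w x ^ 2 ∂μ := integral_sub_average_sq_le (hw.restrict _)
    _ ≤ ∫ x, w x ^ 2 ∂μ :=
      setIntegral_le_integral hw.integrable_sq (ae_of_all _ fun x => sq_nonneg _)

theorem integral_centeredKernel_section [IsFiniteMeasure μ] (hw : Integrable w μ) {y : β}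
    (hs : NullMeasurableSet ((·, y) ⁻¹' F) μ) :
    ∫ x, centeredKernel μ F f w (x, y) ∂μ = 0 := by
  simp_rw [centeredKernel_apply_mk]
  rw [integral_indicator₀ hs, integral_const_mul,
    integral_sub hw.integrableOn (integrable_const _), setIntegral_const,
    measure_smul_setAverage _ (measure_ne_top _ _), sub_self, mul_zero]

theorem centeredKernel_section_not_ae_eq_zero {y : β} (hs : NullMeasurableSet ((·, y) ⁻¹' F) μ)
    (hf : f y ≠ 0) (hpos : 0 < ∫ x in (·, y) ⁻¹' F, max (w x) 0 ∂μ)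
    (hneg : 0 < ∫ x in (·, y) ⁻¹' F, max (-w x) 0 ∂μ) :
    ¬ ∀ᵐ x ∂μ, centeredKernel μ F f w (x, y) = 0 := by
  intro h0
  set c := ⨍ x in (·, y) ⁻¹' F, w x ∂μ
  have hconst : ∀ᵐ x ∂μ.restrict ((·, y) ⁻¹' F), w x = c := by
    refine (ae_restrict_iff'₀ hs).mpr ?_
    filter_upwards [h0] with x hx hxF
    rw [centeredKernel_apply_mk, Set.indicator_of_mem hxF] at hx
    exact sub_eq_zero.mp ((mul_eq_zero.mp hx).resolve_left hf)
  rcases le_or_gt c 0 with hc | hc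
  · refine hpos.ne' (integral_eq_zero_of_ae ?_)
    filter_upwards [hconst] with x hx
    simp [hx, hc]
  · refine hneg.ne' (integral_eq_zero_of_ae ?_)
    filter_upwards [hconst] with x hx
    simp [hx, hc.le]

variable [MeasurableSpace β] {ν : Measure β}

theorem ae_ae_of_ae_prod_swap [SFinite μ] [SFinite ν] {p : α × β → Prop}
    (h : ∀ᵐ z ∂μ.prod ν, p z) : ∀ᵐ y ∂ν, ∀ᵐ x ∂μ, p (x, y) :=
  Measure.ae_ae_of_ae_prod
    ((Measure.measurePreserving_swap (μ := ν) (ν := μ)).quasiMeasurePreserving.ae h)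

theorem ae_section_ae_eq [SFinite μ] [SFinite ν] (h : F =ᵐ[μ.prod ν] F') :
    ∀ᵐ y ∂ν, ((·, y) ⁻¹' F : Set α) =ᵐ[μ] (·, y) ⁻¹' F' := by
  filter_upwards [ae_ae_of_ae_prod_swap (eventuallyEq_set.mp h)] with y hy
  exact eventuallyEq_set.mpr hy

theorem ae_nullMeasurableSet_section [SFinite μ] [SFinite ν]
    (hF : NullMeasurableSet F (μ.prod ν)) : ∀ᵐ y ∂ν, NullMeasurableSet ((·, y) ⁻¹' F) μ := by
  filter_upwards [ae_section_ae_eq hF.toMeasurable_ae_eq] with y hy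
  exact ((measurableSet_toMeasurable _ F).preimage measurable_prodMk_right).nullMeasurableSet.congr
    hy

theorem centeredKernel_ae_eq [SFinite μ] [SFinite ν] (h : F =ᵐ[μ.prod ν] F') :
    centeredKernel μ F f w =ᵐ[μ.prod ν] centeredKernel μ F' f w := by
  filter_upwards [h, Measure.quasiMeasurePreserving_snd.ae (ae_section_ae_eq h)] with p hp hsec
  have hp' : p ∈ F ↔ p ∈ F' := Iff.of_eq hp
  by_cases hpF : p ∈ F
  · simp only [centeredKernel, Set.indicator_of_mem hpF, Set.indicator_of_mem (hp'.mp hpF),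
      setAverage_congr hsec]
  · simp only [centeredKernel, Set.indicator_of_notMem hpF,
      Set.indicator_of_notMem (mt hp'.mpr hpF)]

theorem measurable_setAverage_section [SFinite μ] (hF : MeasurableSet F)
    (hw : StronglyMeasurable w) : Measurable fun y => ⨍ x in (·, y) ⁻¹' F, w x ∂μ := by
  have hint : (fun y => ∫ x in (·, y) ⁻¹' F, w x ∂μ)
      = fun y => ∫ x, F.indicator (fun p => w p.1) (x, y) ∂μ :=
    funext fun y => (integral_indicator (hF.preimage measurable_prodMk_right)).symm
  simp_rw [setAverage_eq, smul_eq_mul, measureReal_def]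
  refine (measurable_measure_prodMk_right hF).ennreal_toReal.inv.mul ?_
  rw [hint]
  exact ((hw.comp_measurable measurable_fst).indicator hF).integral_prod_left'.measurable

theorem memLp_centeredKernel_of_measurableSet [IsFiniteMeasure μ] [SFinite ν]
    (hF : MeasurableSet F) (hwm : StronglyMeasurable w) (hw : MemLp w 2 μ)
    (hfm : StronglyMeasurable f) (hf : MemLp f 2 ν) :
    MemLp (centeredKernel μ F f w) 2 (μ.prod ν) := by
  have hsm : StronglyMeasurable (centeredKernel μ F f w) :=
    ((hfm.comp_measurable measurable_snd).mul ((hwm.comp_measurable measurable_fst).sub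
      ((measurable_setAverage_section hF hwm).comp measurable_snd).stronglyMeasurable)).indicator hF
  have hsm2 : StronglyMeasurable fun p => centeredKernel μ F f w p ^ 2 := hsm.pow 2
  refine (memLp_two_iff_integrable_sq hsm.aestronglyMeasurable).mpr
    ((integrable_prod_iff' hsm2.aestronglyMeasurable).mpr ⟨ae_of_all _ fun y => ?_, ?_⟩)
  · simp_rw [centeredKernel_sq_apply_mk]
    exact ((hw.sub (memLp_const _)).integrable_sq.const_mul _).indicator
      (hF.preimage measurable_prodMk_right)
  · refine (hf.integrable_sq.mul_const (∫ x, w x ^ 2 ∂μ)).mono'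
      hsm2.norm.integral_prod_left'.aestronglyMeasurable (ae_of_all _ fun y => ?_)
    simp only [norm_pow, Real.norm_eq_abs, sq_abs]
    rw [abs_of_nonneg (integral_nonneg fun x => sq_nonneg _)]
    exact integral_centeredKernel_sq_section_le hw
      (hF.preimage measurable_prodMk_right).nullMeasurableSet

theorem memLp_centeredKernel [IsFiniteMeasure μ] [SFinite ν]
    (hF : NullMeasurableSet F (μ.prod ν)) (hwm : StronglyMeasurable w) (hw : MemLp w 2 μ)
    (hfm : StronglyMeasurable f) (hf : MemLp f 2 ν) :
    MemLp (centeredKernel μ F f w) 2 (μ.prod ν) :=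
  (memLp_centeredKernel_of_measurableSet (measurableSet_toMeasurable _ F) hwm hw hfm hf).ae_eq
    (centeredKernel_ae_eq hF.toMeasurable_ae_eq)

theorem ae_integral_centeredKernel_section_eq_zero [IsFiniteMeasure μ] [SFinite ν]
    (hF : NullMeasurableSet F (μ.prod ν)) (hw : Integrable w μ) :
    ∀ᵐ y ∂ν, ∫ x, centeredKernel μ F f w (x, y) ∂μ = 0 := by
  filter_upwards [ae_nullMeasurableSet_section hF] with y hy
  exact integral_centeredKernel_section hw hy

theorem centeredKernel_not_ae_eq_zero [SFinite μ] [SFinite ν]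
    (hF : NullMeasurableSet F (μ.prod ν)) {S : Set β} (hS : ν S ≠ 0)
    (hf : ∀ y ∈ S, f y ≠ 0) (hpos : ∀ y ∈ S, 0 < ∫ x in (·, y) ⁻¹' F, max (w x) 0 ∂μ)
    (hneg : ∀ y ∈ S, 0 < ∫ x in (·, y) ⁻¹' F, max (-w x) 0 ∂μ) :
    ¬ centeredKernel μ F f w =ᵐ[μ.prod ν] 0 := by
  intro h0
  obtain ⟨y, hyS, hs, hy0⟩ := Measure.exists_mem_of_measure_ne_zero_of_ae hS
    (ae_restrict_of_ae ((ae_nullMeasurableSet_section hF).and (ae_ae_of_ae_prod_swap h0)))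
  exact centeredKernel_section_not_ae_eq_zero hs (hf y hyS) (hpos y hyS) (hneg y hyS) hy0

theorem memLp_two_mul_prod [SFinite ν] (hw : MemLp w 2 μ) (hf : MemLp f 2 ν) :
    MemLp (fun p : α × β => w p.1 * f p.2) 2 (μ.prod ν) := by
  refine (memLp_two_iff_integrable_sq (f := fun p : α × β => w p.1 * f p.2)
    ((hw.1.comp_quasiMeasurePreserving Measure.quasiMeasurePreserving_fst).mul
      (hf.1.comp_quasiMeasurePreserving Measure.quasiMeasurePreserving_snd))).mpr ?_
  simpa only [mul_pow] using hw.integrable_sq.mul_prod hf.integrable_sq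

theorem integral_centeredKernel_mul [IsFiniteMeasure μ] [SFinite ν]
    (hF : NullMeasurableSet F (μ.prod ν)) (hwm : StronglyMeasurable w) (hw : MemLp w 2 μ)
    (hfm : StronglyMeasurable f) (hf : MemLp f 2 ν) {k : α × β → ℝ} (hk : MemLp k 2 (μ.prod ν))
    (hk0 : ∀ᵐ y ∂ν, ∫ x, k (x, y) ∂μ = 0) (hkF : ∀ᵐ p ∂μ.prod ν, p ∉ F → k p = 0) :
    ∫ p, centeredKernel μ F f w p * k p ∂μ.prod ν = ∫ x, ∫ y, w x * k (x, y) * f y ∂ν ∂μ := by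
  set M := centeredKernel μ F f w
  set G := fun y => ⨍ x in (·, y) ⁻¹' F, w x ∂μ
  have hWk : Integrable (fun p => w p.1 * f p.2 * k p) (μ.prod ν) :=
    (memLp_two_mul_prod hw hf).integrable_mul hk
  have hMk : Integrable (fun p => M p * k p) (μ.prod ν) :=
    (memLp_centeredKernel hF hwm hw hfm hf).integrable_mul hk
  -- on `F`, `w ⊗ f - M` depends on `y` only, hence is killed by the column integrals of `k`
  have hsplit : (fun p => w p.1 * f p.2 * k p - M p * k p) =ᵐ[μ.prod ν]
      fun p => f p.2 * G p.2 * k p := by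
    filter_upwards [hkF] with p hp
    by_cases hpF : p ∈ F
    · simp only [M, G, centeredKernel, Set.indicator_of_mem hpF]; ring
    · simp [M, centeredKernel, Set.indicator_of_notMem hpF, hp hpF]
  have hrest : ∫ p, f p.2 * G p.2 * k p ∂μ.prod ν = 0 := by
    rw [integral_prod_symm _ ((hWk.sub hMk).congr hsplit)]
    refine integral_eq_zero_of_ae ?_
    filter_upwards [hk0] with y hy
    simp only [integral_const_mul, hy, mul_zero, Pi.zero_apply]
  calc ∫ p, M p * k p ∂μ.prod ν
      = ∫ p, w p.1 * f p.2 * k p ∂μ.prod ν - ∫ p, f p.2 * G p.2 * k p ∂μ.prod ν := by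
        rw [← integral_congr_ae hsplit, integral_sub hWk hMk]; ring
    _ = ∫ x, ∫ y, w x * k (x, y) * f y ∂ν ∂μ := by
        rw [hrest, sub_zero, integral_prod _ hWk]
        congr with x
        congr with y
        ring

end CenteredKernel

theorem inner_toLp_eq_integral_mul {γ : Type*} [MeasurableSpace γ] {ρ : Measure γ} {g : γ → ℝ}
    (hg : MemLp g 2 ρ) (k : Lp ℝ 2 ρ) : ⟪hg.toLp g, k⟫ = ∫ p, g p * k p ∂ρ := by
  rw [L2.inner_def]
  refine integral_congr_ae ?_
  filter_upwards [hg.coeFn_toLp] with p hp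
  simp [hp, mul_comm]

instance : IsFiniteMeasure μ01 := by
  unfold μ01
  infer_instance

theorem μ01_apply_of_subset_Icc {S : Set ℝ} (hS : S ⊆ Set.Icc 0 1) : μ01 S = volume S := by
  rw [μ01, Measure.restrict_apply' measurableSet_Icc, Set.inter_eq_self_of_subset_left hS]

theorem Mopt_eq_centeredKernel (k₀ : ℝ × ℝ → ℝ) (l : ℝ) (f₀ w : ℝ → ℝ) :
    Mopt k₀ l f₀ w = centeredKernel μ01 (Fset k₀ l) f₀ w := by
  simp only [Mopt, centeredKernel, setAverage_eq, smul_eq_mul, measureReal_def, Fsec,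
    div_eq_inv_mul]
  rfl

theorem nullMeasurableSet_Fset {k₀ : ℝ × ℝ → ℝ} (hk₀ : AEMeasurable k₀ ν01) (l : ℝ) :
    NullMeasurableSet (Fset k₀ l) (μ01.prod μ01) :=
  (measurableSet_Icc.prod measurableSet_Icc).nullMeasurableSet.inter
    (nullMeasurableSet_le aemeasurable_const hk₀)

theorem inv_norm_smul_toLp_mem_feasSet {k₀ : ℝ × ℝ → ℝ} {l : ℝ} {g : ℝ × ℝ → ℝ}
    (hg : MemLp g 2 ν01) (hg0 : hg.toLp g ≠ 0) (hsec : ∀ᵐ y ∂μ01, ∫ x, g (x, y) ∂μ01 = 0)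
    (hsupp : ∀ p ∉ Fset k₀ l, g p = 0) : ‖hg.toLp g‖⁻¹ • hg.toLp g ∈ feasSet k₀ l := by
  have hcoe : ⇑(‖hg.toLp g‖⁻¹ • hg.toLp g) =ᵐ[ν01] fun p => ‖hg.toLp g‖⁻¹ * g p := by
    filter_upwards [Lp.coeFn_smul (‖hg.toLp g‖⁻¹ : ℝ) (hg.toLp g), hg.coeFn_toLp] with p h1 h2
    rw [h1, Pi.smul_apply, h2, smul_eq_mul]
  refine ⟨?_, ?_, norm_smul_inv_norm hg0⟩
  · filter_upwards [ae_ae_of_ae_prod_swap hcoe, hsec] with y hy h0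
    rw [integral_congr_ae hy, integral_const_mul, h0, mul_zero]
  · filter_upwards [hcoe] with p hp hpF
    rw [hp, hsupp p hpF, mul_zero]

end KernelPerturbation

open KernelPerturbation

theorem optimal_kernel_perturbation_for_expectation
    (k₀ : ℝ × ℝ → ℝ) (hk₀L2 : MemLp k₀ 2 ν01)
    (f₀ : Lp ℝ 2 μ01)
    (l : ℝ)
    (w : Lp ℝ 2 μ01)
    (Ξ' : Set ℝ) (hΞ'sub : Ξ' ⊆ XiF k₀ l) (hΞ'pos : 0 < volume Ξ')
    (hf₀pos : ∀ y ∈ Ξ', 0 < f₀ y)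
    (hwpos : ∀ y ∈ Ξ', 0 < ∫ x in Fsec k₀ l y, max (w x) 0 ∂μ01)
    (hwneg : ∀ y ∈ Ξ', 0 < ∫ x in Fsec k₀ l y, max (-(w x)) 0 ∂μ01) :
    0 < (eLpNorm (Mopt k₀ l f₀ w) 2 ν01).toReal ∧
    ∃ khat : Lp ℝ 2 ν01,
      (∀ᵐ p ∂ν01, khat p =
        Mopt k₀ l f₀ w p / (eLpNorm (Mopt k₀ l f₀ w) 2 ν01).toReal) ∧
      khat ∈ feasSet k₀ l ∧
      (∀ k ∈ feasSet k₀ l, Jobj w f₀ k ≤ Jobj w f₀ khat) ∧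
      (∀ k ∈ feasSet k₀ l, (∀ k' ∈ feasSet k₀ l, Jobj w f₀ k' ≤ Jobj w f₀ k) →
        k = khat) := by
  have hF := nullMeasurableSet_Fset hk₀L2.1.aemeasurable l
  have hw := Lp.memLp w
  have hf₀ := Lp.memLp f₀
  have hMmem : MemLp (Mopt k₀ l f₀ w) 2 ν01 := by
    rw [Mopt_eq_centeredKernel]
    exact memLp_centeredKernel hF (Lp.stronglyMeasurable w) hw (Lp.stronglyMeasurable f₀) hf₀
  set M := hMmem.toLp _
  have hnorm : (eLpNorm (Mopt k₀ l f₀ w) 2 ν01).toReal = ‖M‖ := (Lp.norm_toLp _ _).symm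
  have hΞ' : μ01 Ξ' ≠ 0 := by
    rw [μ01_apply_of_subset_Icc fun y hy => (hΞ'sub hy).1]
    exact hΞ'pos.ne'
  have hM0 : M ≠ 0 := by
    rw [Ne, Lp.eq_zero_iff_ae_eq_zero]
    intro hM
    refine centeredKernel_not_ae_eq_zero hF hΞ' (fun y hy => (hf₀pos y hy).ne') hwpos hwneg ?_
    rw [← Mopt_eq_centeredKernel]
    exact hMmem.coeFn_toLp.symm.trans hM
  have hJ : ∀ k ∈ feasSet k₀ l, ‖k‖ = 1 ∧ Jobj w f₀ k = ⟪M, k⟫ := fun k hk => by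
    refine ⟨hk.2.2, ?_⟩
    rw [inner_toLp_eq_integral_mul, Mopt_eq_centeredKernel]
    exact (integral_centeredKernel_mul hF (Lp.stronglyMeasurable w) hw
      (Lp.stronglyMeasurable f₀) hf₀ (Lp.memLp k) hk.1 hk.2.1).symm
  have hkhat : ‖M‖⁻¹ • M ∈ feasSet k₀ l := by
    refine inv_norm_smul_toLp_mem_feasSet hMmem hM0 ?_ ?_
    · rw [Mopt_eq_centeredKernel]
      exact ae_integral_centeredKernel_section_eq_zero hF (hw.integrable one_le_two)
    · intro p hp
      rw [Mopt_eq_centeredKernel, centeredKernel, Set.indicator_of_notMem hp]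
  refine ⟨hnorm ▸ norm_pos_iff.mpr hM0, ‖M‖⁻¹ • M, ?_, hkhat,
    unique_maximizer_of_eq_inner hM0 hJ hkhat⟩
  filter_upwards [Lp.coeFn_smul ‖M‖⁻¹ M, hMmem.coeFn_toLp] with p h1 h2
  rw [h1, Pi.smul_apply, h2, smul_eq_mul, hnorm, div_eq_inv_mul]
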